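/- arXiv:1203.6551 — 6 statements merged into one kernel-verified Lean document; each statement's English description precedes it below -/
import Mathlib

section
/- If p is a prime congruent to 1 modulo 12, then p can be written in the form p = a² + 12 b² where a and b are relatively prime positive integers, and this representation is unique: there is exactly one pair (a, b) of positive integers with gcd(a,b) = 1 and p = a² + 12 b². -/
/-!
A cube root of unity `ω` in `ZMod p` (which exists since `3 ∣ p - 1`) gives `(2ω + 1)² = -3`.
By Thue's pigeonhole lemma, `x ≡ (2ω + 1) y (mod p)` has a solution with `x², y² < p`, so
`x² + 3y² ∈ {p, 2p, 3p}`; reducing mod 3 excludes `2p` and turns `3p` into a representation of `p`.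
Hence `p = a² + 3b²`, and `p ≡ 1 (mod 4)` forces `b` even, giving `p = a² + 12e²`, with
`gcd(a, e) = 1` as `p` is squarefree. For uniqueness, two representations satisfy
`p ∣ (ad - bc)(ad + bc)`, while `p² = (ac ± 12bd)² + 12(ad ∓ bc)²` bounds `|ad ∓ bc| < p`.
As `ad + bc > 0`, this leaves `ad = bc`, and coprimality gives `(a, b) = (c, d)`.
-/

theorem ZMod.exists_sq_eq_neg_three {p : ℕ} [Fact p.Prime] (hp : p % 3 = 1) :
    ∃ c : ZMod p, c ^ 2 = -3 := by
  have : Fact (Nat.Prime 3) := ⟨Nat.prime_three⟩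
  obtain ⟨ω, hω⟩ := exists_prime_orderOf_dvd_card (G := (ZMod p)ˣ) 3
    (by rw [ZMod.card_units]; omega)
  have hζ : IsPrimitiveRoot (ω : ZMod p) 3 :=
    IsPrimitiveRoot.coe_units_iff.2 (hω ▸ IsPrimitiveRoot.orderOf ω)
  have hsum := hζ.geom_sum_eq_zero (by norm_num)
  simp only [Finset.sum_range_succ, Finset.sum_range_zero] at hsum
  exact ⟨2 * ω + 1, by linear_combination 4 * hsum⟩

theorem ZMod.exists_abs_le_sqrt_intCast_eq_mul (n : ℕ) [NeZero n] (c : ZMod n) :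
    ∃ x y : ℤ, (x ≠ 0 ∨ y ≠ 0) ∧ |x| ≤ n.sqrt ∧ |y| ≤ n.sqrt ∧ (x : ZMod n) = c * y := by
  set s := Finset.range (n.sqrt + 1) ×ˢ Finset.range (n.sqrt + 1)
  have hcard : (Finset.univ : Finset (ZMod n)).card < s.card := by
    simpa [s, ZMod.card, sq] using Nat.lt_succ_sqrt' n
  obtain ⟨⟨a₁, b₁⟩, h₁, ⟨a₂, b₂⟩, h₂, hne, heq⟩ := Finset.exists_ne_map_eq_of_card_lt_of_maps_to
    hcard (f := fun ab : ℕ × ℕ => (ab.1 : ZMod n) - c * ab.2) (fun _ _ => Finset.mem_univ _)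
  simp only [s, Finset.mem_product, Finset.mem_range] at h₁ h₂
  refine ⟨a₁ - a₂, b₁ - b₂, ?_, abs_le.2 ⟨by omega, by omega⟩, abs_le.2 ⟨by omega, by omega⟩, ?_⟩
  · contrapose! hne
    ext <;> omega
  · push_cast
    linear_combination heq

theorem Nat.Prime.sqrt_sq_lt {p : ℕ} (hp : p.Prime) : p.sqrt ^ 2 < p :=
  (Nat.sqrt_le' p).lt_of_ne fun h => hp.not_isSquare ⟨p.sqrt, by rw [← sq, h]⟩

theorem Nat.Prime.exists_eq_sq_add_three_mul_sq {p : ℕ} (hp : p.Prime) (h3 : p % 3 = 1) :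
    ∃ a b : ℤ, (p : ℤ) = a ^ 2 + 3 * b ^ 2 := by
  have := Fact.mk hp
  obtain ⟨c, hc⟩ := ZMod.exists_sq_eq_neg_three h3
  obtain ⟨x, y, hxy, hx, hy, hcong⟩ := ZMod.exists_abs_le_sqrt_intCast_eq_mul p c
  obtain ⟨k, hk⟩ : (p : ℤ) ∣ x ^ 2 + 3 * y ^ 2 := by
    rw [← ZMod.intCast_zmod_eq_zero_iff_dvd]
    push_cast
    rw [hcong]
    linear_combination y ^ 2 * hc
  have hsqrt : (p.sqrt : ℤ) ^ 2 < p := by exact_mod_cast hp.sqrt_sq_lt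
  have hpos : 0 < x ^ 2 + 3 * y ^ 2 := by
    rcases hxy with h | h <;> positivity
  have hk0 : 0 < k := by nlinarith
  have hk4 : k < 4 := by nlinarith [sq_abs x, sq_abs y, abs_nonneg x, abs_nonneg y]
  interval_cases k
  · exact ⟨x, y, by linarith⟩
  · exfalso
    have hmod := congrArg (Int.cast : ℤ → ZMod 3) hk
    push_cast at hmod
    rw [show (p : ZMod 3) = 1 by rw [← ZMod.natCast_mod, h3, Nat.cast_one]] at hmod
    generalize (x : ZMod 3) = u, (y : ZMod 3) = v at hmod
    revert u v; decide
  · obtain ⟨u, rfl⟩ : (3 : ℤ) ∣ x :=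
      Int.prime_three.dvd_of_dvd_pow (n := 2) ⟨p - y ^ 2, by linarith⟩
    exact ⟨y, u, by linarith⟩

theorem Int.even_of_sq_add_three_mul_sq_emod_four {a b : ℤ} (h : (a ^ 2 + 3 * b ^ 2) % 4 = 1) :
    Even b := by
  rcases Int.even_or_odd' a with ⟨k, rfl | rfl⟩ <;> rcases Int.even_or_odd' b with ⟨m, rfl | rfl⟩
    <;> first | exact even_two_mul m | (ring_nf at h; omega)

theorem Int.gcd_eq_one_of_prime_eq_sq_add_mul_sq {p a b n : ℤ} (hp : Prime p)
    (h : p = a ^ 2 + n * b ^ 2) : Int.gcd a b = 1 := by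
  have hg : (Int.gcd a b : ℤ) * Int.gcd a b ∣ p := by
    rw [h, ← sq]
    exact dvd_add (pow_dvd_pow_of_dvd (Int.gcd_dvd_left a b) 2)
      ((pow_dvd_pow_of_dvd (Int.gcd_dvd_right a b) 2).mul_left n)
  simpa [Int.ofNat_isUnit] using hp.squarefree _ hg

theorem Int.eq_of_prime_eq_sq_add_mul_sq {p n a b c d : ℤ} (hp : Prime p) (hn : 1 < n)
    (ha : 0 < a) (hb : 0 < b) (hc : 0 < c) (hd : 0 < d)
    (hab : Int.gcd a b = 1) (hcd : Int.gcd c d = 1)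
    (h₁ : p = a ^ 2 + n * b ^ 2) (h₂ : p = c ^ 2 + n * d ^ 2) : a = c ∧ b = d := by
  have hp0 : 0 < p := by rw [h₁]; positivity
  have hdvd : p ∣ (a * d - b * c) * (a * d + b * c) :=
    ⟨d ^ 2 - b ^ 2, by linear_combination b ^ 2 * h₂ - d ^ 2 * h₁⟩
  rcases hp.dvd_or_dvd hdvd with h | h
  · have hsq : p ^ 2 = (a * c + n * b * d) ^ 2 + n * (a * d - b * c) ^ 2 := by
      linear_combination (c ^ 2 + n * d ^ 2) * h₁ + p * h₂
    have hlt : (a * d - b * c) ^ 2 < p ^ 2 := by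
      nlinarith [sq_nonneg (a * c + n * b * d), sq_nonneg (a * d - b * c)]
    have : a * d - b * c = 0 := Int.eq_zero_of_abs_lt_dvd h (abs_lt_of_sq_lt_sq hlt hp0.le)
    refine Rat.div_int_inj hb hd hab hcd ?_
    rw [div_eq_div_iff (by positivity) (by positivity)]
    exact_mod_cast (by linarith : a * d = c * b)
  · have hsq : p ^ 2 = (a * c - n * b * d) ^ 2 + n * (a * d + b * c) ^ 2 := by
      linear_combination (c ^ 2 + n * d ^ 2) * h₁ + p * h₂
    have hle : p ≤ a * d + b * c := Int.le_of_dvd (by positivity) h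
    nlinarith [sq_nonneg (a * c - n * b * d), mul_le_mul hle hle hp0.le (by positivity)]

/-- A prime `p ≡ 1 (mod 12)` has a unique representation `p = a² + 12 b²` with
`a, b` relatively prime positive integers. -/
theorem stmt_2 (p : ℕ) (hp : p.Prime) (h1 : p % 12 = 1) :
    ∃! ab : ℤ × ℤ, 0 < ab.1 ∧ 0 < ab.2 ∧ Int.gcd ab.1 ab.2 = 1 ∧
      (p : ℤ) = ab.1 ^ 2 + 12 * ab.2 ^ 2 := by
  obtain ⟨a, b, hab⟩ := hp.exists_eq_sq_add_three_mul_sq (by omega)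
  obtain ⟨e, rfl⟩ : Even b := Int.even_of_sq_add_three_mul_sq_emod_four (a := a) (by omega)
  have hpZ := Nat.prime_iff_prime_int.mp hp
  have hrep : (p : ℤ) = |a| ^ 2 + 12 * |e| ^ 2 := by rw [sq_abs, sq_abs, hab]; ring
  have hgcd := Int.gcd_eq_one_of_prime_eq_sq_add_mul_sq hpZ hrep
  have ha : a ≠ 0 := by rintro rfl; omega
  have he : e ≠ 0 := by
    rintro rfl
    exact hp.not_isSquare ⟨a.natAbs, by zify; rw [abs_mul_abs_self, hab]; ring⟩
  refine ⟨(|a|, |e|), ⟨abs_pos.2 ha, abs_pos.2 he, hgcd, hrep⟩,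
    fun ⟨c, d⟩ ⟨hc, hd, hcd, hrep'⟩ => ?_⟩
  obtain ⟨rfl, rfl⟩ := Int.eq_of_prime_eq_sq_add_mul_sq hpZ (by norm_num) hc hd
    (abs_pos.2 ha) (abs_pos.2 he) hcd hgcd hrep' hrep
  rfl
end

section
/- Every prime p congruent to 1 modulo 3 can be written in the form p = x² + 3 y² with x and y positive integers, and this representation is unique: there is exactly one pair (x, y) of positive integers with p = x² + 3 y². -/
-- step 1: square root of -3
lemma aux_sqrt_neg3 (p : ℕ) (hp : p.Prime) (h1 : p % 3 = 1) :
    ∃ a : ZMod p, a ^ 2 = -3 := by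
  haveI : Fact p.Prime := ⟨hp⟩
  have hdvd : 3 ∣ Fintype.card (ZMod p)ˣ := by
    rw [ZMod.card_units_eq_totient, Nat.totient_prime hp]
    have := hp.two_le
    omega
  obtain ⟨ζ, hζ⟩ := exists_prime_orderOf_dvd_card (G := (ZMod p)ˣ) 3 hdvd
  set z : ZMod p := (ζ : ZMod p) with hz
  have hz3 : z ^ 3 = 1 := by
    have : ζ ^ 3 = 1 := by rw [← hζ]; exact pow_orderOf_eq_one ζ
    have := congrArg (Units.val) this
    push_cast at this
    simpa [hz] using this
  have hzne : z ≠ 1 := by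
    intro h
    have : ζ = 1 := by
      ext
      simpa [hz] using h
    rw [this] at hζ
    simp at hζ
  have hsum : z ^ 2 + z + 1 = 0 := by
    have hfac : (z - 1) * (z ^ 2 + z + 1) = 0 := by
      have : (z - 1) * (z ^ 2 + z + 1) = z ^ 3 - 1 := by ring
      rw [this, hz3, sub_self]
    rcases mul_eq_zero.mp hfac with h | h
    · exact absurd (by linear_combination h) hzne
    · exact h
  exact ⟨2 * z + 1, by linear_combination 4 * hsum⟩


-- p prime is not a perfect square; Nat.sqrt p squared < p
lemma aux_sqrt_lt (p : ℕ) (hp : p.Prime) : Nat.sqrt p * Nat.sqrt p < p := by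
  rcases Nat.lt_or_ge (Nat.sqrt p * Nat.sqrt p) p with h | h
  · exact h
  · exfalso
    have h2 : Nat.sqrt p * Nat.sqrt p ≤ p := by have := Nat.sqrt_le' p; nlinarith
    have heq : p = Nat.sqrt p * Nat.sqrt p := le_antisymm h h2
    have hdvd : Nat.sqrt p ∣ p := ⟨Nat.sqrt p, heq⟩
    rcases (Nat.Prime.eq_one_or_self_of_dvd hp _ hdvd) with h1 | h1
    · rw [h1] at heq; have := hp.two_le; omega
    · rw [h1] at heq
      nlinarith [hp.two_le]

-- Thue: find u v : ℤ with small squares, u ≡ a v mod p, not both zero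
lemma aux_thue (p : ℕ) (hp : p.Prime) (a : ZMod p) :
    ∃ u v : ℤ, ((u : ZMod p) = a * v) ∧ u ^ 2 < p ∧ v ^ 2 < p ∧ ¬(u = 0 ∧ v = 0) := by
  haveI : Fact p.Prime := ⟨hp⟩
  set m := Nat.sqrt p with hm
  have hcard : p < (m + 1) * (m + 1) := by
    have h4 := Nat.lt_succ_sqrt' p
    nlinarith
  set S : Finset (ℕ × ℕ) := Finset.range (m + 1) ×ˢ Finset.range (m + 1) with hS
  have hSc : (Finset.univ : Finset (ZMod p)).card < S.card := by
    rw [hS, Finset.card_product, Finset.card_range, Finset.card_univ, ZMod.card]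
    exact hcard
  obtain ⟨q1, hq1, q2, hq2, hne, heq⟩ :=
    Finset.exists_ne_map_eq_of_card_lt_of_maps_to hSc
      (f := fun q : ℕ × ℕ => (q.1 : ZMod p) - a * q.2)
      (fun x _ => Finset.mem_univ _)
  simp only [hS, Finset.mem_product, Finset.mem_range] at hq1 hq2
  refine ⟨(q1.1 : ℤ) - q2.1, (q1.2 : ℤ) - q2.2, ?_, ?_, ?_, ?_⟩
  · push_cast
    have : (q1.1 : ZMod p) - a * q1.2 = (q2.1 : ZMod p) - a * q2.2 := heq
    linear_combination this
  · have h1 : (q1.1 : ℤ) < m + 1 := by exact_mod_cast hq1.1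
    have h2 : (q2.1 : ℤ) < m + 1 := by exact_mod_cast hq2.1
    have hmp : (m : ℤ) * m < p := by exact_mod_cast aux_sqrt_lt p hp
    nlinarith [Int.natCast_nonneg q1.1, Int.natCast_nonneg q2.1]
  · have h1 : (q1.2 : ℤ) < m + 1 := by exact_mod_cast hq1.2
    have h2 : (q2.2 : ℤ) < m + 1 := by exact_mod_cast hq2.2
    have hmp : (m : ℤ) * m < p := by exact_mod_cast aux_sqrt_lt p hp
    nlinarith [Int.natCast_nonneg q1.2, Int.natCast_nonneg q2.2]
  · rintro ⟨h1, h2⟩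
    apply hne
    have e1 : q1.1 = q2.1 := by omega
    have e2 : q1.2 = q2.2 := by omega
    exact Prod.ext e1 e2


lemma aux_not_sq (p : ℕ) (hp : p.Prime) (n : ℕ) : p ≠ n * n := by
  intro h
  have hdvd : n ∣ p := ⟨n, h⟩
  rcases hp.eq_one_or_self_of_dvd _ hdvd with h1 | h1
  · subst h1; have := hp.two_le; omega
  · subst h1; nlinarith [hp.two_le]

lemma aux_uniq (p : ℕ) (hp : p.Prime) (a b c d : ℤ) (ha : 0 < a) (hb : 0 < b)
    (hc : 0 < c) (hd : 0 < d) (e1 : (p : ℤ) = a ^ 2 + 3 * b ^ 2)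
    (e2 : (p : ℤ) = c ^ 2 + 3 * d ^ 2) : a = c ∧ b = d := by
  have hpZ : Prime (p : ℤ) := Nat.prime_iff_prime_int.mp hp
  have hppos : (0 : ℤ) < p := by exact_mod_cast hp.pos
  have key : (a * d - b * c) * (a * d + b * c) = p * (d ^ 2 - b ^ 2) := by
    linear_combination (-d ^ 2) * e1 + b ^ 2 * e2
  have hdvd : (p : ℤ) ∣ (a * d - b * c) * (a * d + b * c) := ⟨d ^ 2 - b ^ 2, key⟩
  have hpp : (p : ℤ) * p = (a ^ 2 + 3 * b ^ 2) * (c ^ 2 + 3 * d ^ 2) := by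
    rw [← e1, ← e2]
  rcases (hpZ.dvd_mul).mp hdvd with h | h
  · -- p ∣ ad - bc, show ad = bc then conclude
    have had : a * d < p := by nlinarith
    have hbc : b * c < p := by nlinarith
    have habs : |a * d - b * c| < p := by
      rw [abs_lt]
      constructor <;> nlinarith [mul_pos ha hd, mul_pos hb hc]
    have h0 : a * d - b * c = 0 := Int.eq_zero_of_abs_lt_dvd h habs
    have hd2 : d ^ 2 = b ^ 2 := by
      have : (p : ℤ) * (d ^ 2 - b ^ 2) = 0 := by rw [← key, h0]; ring
      rcases mul_eq_zero.mp this with h' | h'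
      · omega
      · linarith [h']
    have hbd : b = d := by nlinarith
    constructor
    · nlinarith
    · exact hbd
  · -- p ∣ ad + bc, contradiction
    exfalso
    have hpos : 0 < a * d + b * c := by positivity
    have hle : (p : ℤ) ≤ a * d + b * c := Int.le_of_dvd hpos h
    have hid : (a * c - 3 * b * d) ^ 2 + 3 * (a * d + b * c) ^ 2 = p * p := by
      linear_combination -hpp
    nlinarith [sq_nonneg (a * c - 3 * b * d)]


lemma aux_not_sq' (p : ℕ) (hp : p.Prime) (u : ℤ) : (p : ℤ) ≠ u ^ 2 := by
  intro h
  have : p = u.natAbs * u.natAbs := by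
    have h2 : ((u.natAbs * u.natAbs : ℕ) : ℤ) = (p : ℤ) := by
      rw [Int.natAbs_mul_self, h]; ring
    exact_mod_cast h2.symm
  -- not square
  have hdvd : u.natAbs ∣ p := ⟨u.natAbs, this⟩
  rcases hp.eq_one_or_self_of_dvd _ hdvd with h1 | h1
  · rw [h1] at this; have := hp.two_le; omega
  · rw [h1] at this; nlinarith [hp.two_le]

lemma aux_exists (p : ℕ) (hp : p.Prime) (h1 : p % 3 = 1)
    (a : ZMod p) (ha : a ^ 2 = -3)
    (u v : ℤ) (huv : (u : ZMod p) = a * v) (hu : u ^ 2 < p) (hv : v ^ 2 < p)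
    (hne : ¬(u = 0 ∧ v = 0)) :
    ∃ x y : ℤ, 0 < x ∧ 0 < y ∧ (p : ℤ) = x ^ 2 + 3 * y ^ 2 := by
  haveI : Fact p.Prime := ⟨hp⟩
  have hppos : (0 : ℤ) < p := by exact_mod_cast hp.pos
  have hnd3 : ¬ ((3:ℤ) ∣ (p:ℤ)) := by
    intro h
    have : (3:ℕ) ∣ p := by exact_mod_cast h
    omega
  have hdvd : (p : ℤ) ∣ u ^ 2 + 3 * v ^ 2 := by
    have : ((u ^ 2 + 3 * v ^ 2 : ℤ) : ZMod p) = 0 := by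
      push_cast
      rw [huv, mul_pow, ha]
      ring
    exact_mod_cast (ZMod.intCast_zmod_eq_zero_iff_dvd _ p).mp this
  obtain ⟨k, hk⟩ := hdvd
  have hN0 : u ^ 2 + 3 * v ^ 2 ≠ 0 := by
    intro h
    apply hne
    constructor <;> nlinarith [sq_nonneg u, sq_nonneg v]
  have hNpos : 0 < u ^ 2 + 3 * v ^ 2 :=
    lt_of_le_of_ne (by positivity) (Ne.symm hN0)
  have hk1 : 0 < k := by nlinarith
  have hk2 : k < 4 := by nlinarith
  -- helper facts for constructing the representation
  have build : ∀ x y : ℤ, (p : ℤ) = x ^ 2 + 3 * y ^ 2 →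
      ∃ x' y' : ℤ, 0 < x' ∧ 0 < y' ∧ (p : ℤ) = x' ^ 2 + 3 * y' ^ 2 := by
    intro x y hxy
    have hx0 : x ≠ 0 := by
      rintro rfl
      apply hnd3
      exact ⟨y ^ 2, by linarith [hxy]⟩
    have hy0 : y ≠ 0 := by
      rintro rfl
      exact aux_not_sq' p hp x (by linarith [hxy])
    exact ⟨|x|, |y|, abs_pos.mpr hx0, abs_pos.mpr hy0, by rw [sq_abs, sq_abs]; exact hxy⟩
  interval_cases k
  · -- N = p
    exact build u v (by linarith [hk])
  · -- N = 2p : impossible mod 4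
    exfalso
    have hp2 : p % 2 = 1 := by
      have := hp.eq_one_or_self_of_dvd 2
      rcases Nat.Prime.eq_two_or_odd hp with h | h
      · omega
      · exact h
    have hcast : ((u : ZMod 4) ^ 2 + 3 * (v : ZMod 4) ^ 2) = 2 * (p : ZMod 4) := by
      have := congrArg (fun t : ℤ => (t : ZMod 4)) hk
      push_cast at this
      rw [this]; ring
    have hp4 : (2 : ZMod 4) * (p : ZMod 4) = 2 := by
      have h4 : p % 4 = 1 ∨ p % 4 = 3 := by omega
      have : ((p % 4 : ℕ) : ZMod 4) = (p : ZMod 4) := ZMod.natCast_mod p 4 ▸ rfl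
      rcases h4 with h | h <;> rw [← this, h] <;> decide
    rw [hp4] at hcast
    revert hcast
    generalize (u : ZMod 4) = x
    generalize (v : ZMod 4) = y
    revert x y
    decide
  · -- N = 3p
    have h3u : (3:ℤ) ∣ u := by
      have h3 : Prime (3:ℤ) := Int.prime_three
      have : (3:ℤ) ∣ u ^ 2 := ⟨p - v ^ 2, by linarith [hk]⟩
      exact h3.dvd_of_dvd_pow this
    obtain ⟨w, hw⟩ := h3u
    subst hw
    have hrep : (p : ℤ) = v ^ 2 + 3 * w ^ 2 := by nlinarith [hk]
    exact build v w hrep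

/-- Euler: every prime `p ≡ 1 (mod 3)` has a unique representation `p = x² + 3 y²`
with `x, y` positive integers. -/
theorem stmt_3 (p : ℕ) (hp : p.Prime) (h1 : p % 3 = 1) :
    ∃! xy : ℤ × ℤ, 0 < xy.1 ∧ 0 < xy.2 ∧ (p : ℤ) = xy.1 ^ 2 + 3 * xy.2 ^ 2 := by
  obtain ⟨a, ha⟩ := aux_sqrt_neg3 p hp h1
  obtain ⟨u, v, huv, hu, hv, hne⟩ := aux_thue p hp a
  obtain ⟨x, y, hx, hy, hxy⟩ := aux_exists p hp h1 a ha u v huv hu hv hne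
  refine ⟨(x, y), ⟨hx, hy, hxy⟩, ?_⟩
  rintro ⟨c, d⟩ ⟨hc, hd, hcd⟩
  obtain ⟨h1', h2'⟩ := aux_uniq p hp c d x y hc hd hx hy hcd hxy
  exact Prod.ext h1' h2'
end

section
/- If p is a prime congruent to 5 modulo 6 and p divides an integer n, then n has no representation n = a² + a b + b² with a and b relatively prime integers. -/
/-!
If `p ∣ a² + ab + b²` then `a³ ≡ b³ (mod p)`, since `a³ - b³ = (a - b)(a² + ab + b²)`. When
`p ≡ 2 (mod 3)`, the exponent `3` is prime to `p - 1`, so cubing is injective on `ZMod p`; hence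
`a ≡ b` and `p ∣ 3a²`. As `p ≠ 3`, this forces `p ∣ a` and `p ∣ b`, contradicting `gcd(a, b) = 1`.
-/

namespace FiniteField

variable {K : Type*} [Field K] [Fintype K]

theorem pow_three_injective (hK : Fintype.card K % 3 = 2) :
    Function.Injective fun x : K => x ^ 3 := by
  -- `x ↦ x ^ m` inverts cubing, because `3m = 2(q - 1) + 1`
  obtain ⟨m, hm⟩ : ∃ m, 3 * m = (Fintype.card K - 1) + (Fintype.card K - 1) + 1 :=
    ⟨(2 * Fintype.card K - 1) / 3, by omega⟩
  have hcubeRoot : Function.LeftInverse (fun x : K => x ^ m) fun x => x ^ 3 := by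
    intro x
    show (x ^ 3) ^ m = x
    rcases eq_or_ne x 0 with rfl | hx
    · rw [← pow_mul, zero_pow (by omega)]
    · rw [← pow_mul, hm, pow_add, pow_add, pow_card_sub_one_eq_one x hx, one_mul, one_mul, pow_one]
  exact hcubeRoot.injective

theorem three_ne_zero_of_card_mod_three (hK : Fintype.card K % 3 = 2) : (3 : K) ≠ 0 := by
  intro h3
  have hq := cast_card_eq_zero K
  rw [← Nat.div_add_mod (Fintype.card K) 3, hK] at hq
  push_cast at hq
  have h1 : (1 : K) = 0 := by linear_combination (1 + ((Fintype.card K / 3 : ℕ) : K)) * h3 - hq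
  exact one_ne_zero h1

theorem eq_zero_of_sq_add_mul_add_sq_eq_zero (hK : Fintype.card K % 3 = 2) {x y : K}
    (h : x ^ 2 + x * y + y ^ 2 = 0) : x = 0 ∧ y = 0 := by
  have hxy : x = y := pow_three_injective hK (by linear_combination (x - y) * h)
  subst hxy
  have hx : (3 : K) * x ^ 2 = 0 := by linear_combination h
  have hx0 : x = 0 := by
    simpa [three_ne_zero_of_card_mod_three hK] using hx
  exact ⟨hx0, hx0⟩

end FiniteField

theorem Int.not_prime_dvd_sq_add_mul_add_sq {p : ℕ} (hp : p.Prime) (h3 : p % 3 = 2) {a b : ℤ}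
    (hab : Int.gcd a b = 1) : ¬ (p : ℤ) ∣ a ^ 2 + a * b + b ^ 2 := by
  have := Fact.mk hp
  intro hdvd
  have hzero : (a : ZMod p) ^ 2 + (a : ZMod p) * b + (b : ZMod p) ^ 2 = 0 := by
    exact_mod_cast (ZMod.intCast_zmod_eq_zero_iff_dvd _ p).mpr hdvd
  obtain ⟨ha, hb⟩ := FiniteField.eq_zero_of_sq_add_mul_add_sq_eq_zero (by rwa [ZMod.card]) hzero
  have hunit : IsUnit (p : ℤ) := (Int.isCoprime_iff_gcd_eq_one.mpr hab).isUnit_of_dvd'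
    ((ZMod.intCast_zmod_eq_zero_iff_dvd a p).mp ha) ((ZMod.intCast_zmod_eq_zero_iff_dvd b p).mp hb)
  exact (Nat.prime_iff_prime_int.mp hp).not_isUnit hunit

/-- If `p` is a prime congruent to `5` modulo `6` and `p` divides `n`, then `n` has no
representation `n = a² + a b + b²` with `a, b` relatively prime integers. -/
theorem stmt_4 (p : ℕ) (hp : p.Prime) (h5 : p % 6 = 5) (n : ℤ) (hdvd : (p : ℤ) ∣ n) :
    ¬ ∃ a b : ℤ, Int.gcd a b = 1 ∧ n = a ^ 2 + a * b + b ^ 2 := by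
  rintro ⟨a, b, hab, rfl⟩
  exact Int.not_prime_dvd_sq_add_mul_add_sq hp (by omega) hab hdvd
end

section
/- For every integer g > 0 there exist infinitely many integers m = 2p, with p prime, such that: (i) m can be written as m = 2(a² + b²) with a, b relatively prime integers, and every integer solution (a′, b′) of m = 2(a′² + b′²) satisfies (a′, b′) = (±a, ±b) or (a′, b′) = (±b, ±a); (ii) for every integer k with 0 < |k| ≤ g, the integer m + k has no primitive integer representation as a² + b²; (iii) m has no representation as a² + 4 b² with a, b integers. -/
/-!
For each `0 < |k| ≤ g` pick a prime `q_k ≡ 3 (mod 4)` with `q_k > g`, all distinct. By the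
Chinese remainder theorem and Dirichlet's theorem there are infinitely many primes
`p ≡ 1 (mod 4)` with `q_k ∣ 2p + k` for every such `k`; take `m = 2p`.
Then `p = a² + b²` (Fermat), uniquely up to signs and order because a Gaussian integer of
prime norm is irreducible; `m + k` is divisible by a prime `≡ 3 (mod 4)`, modulo which `-1`
is not a square, so it has no primitive representation `a² + b²`; and `m ≡ 2 (mod 4)`,
whereas `a² + 4b² ≡ 0, 1 (mod 4)`.
-/

open Zsqrtd

theorem Zsqrtd.irreducible_of_prime_natAbs_norm {d : ℤ} {z : ℤ√d} (h : z.norm.natAbs.Prime) :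
    Irreducible z where
  not_isUnit hz := h.ne_one (norm_eq_one_iff.mpr hz)
  isUnit_or_isUnit x y hxy := by
    rw [hxy, norm_mul, Int.natAbs_mul, Nat.prime_mul_iff] at h
    rcases h with ⟨-, hy⟩ | ⟨-, hx⟩
    · exact .inr (norm_eq_one_iff.mp hy)
    · exact .inl (norm_eq_one_iff.mp hx)

lemma Int.sq_eq_one_and_eq_zero_of_mul_self_add_mul_self_eq_one {x y : ℤ}
    (h : x * x + y * y = 1) : x ^ 2 = 1 ∧ y = 0 ∨ x = 0 ∧ y ^ 2 = 1 := by
  have : -1 ≤ x ∧ x ≤ 1 ∧ -1 ≤ y ∧ y ≤ 1 := by refine ⟨?_, ?_, ?_, ?_⟩ <;> nlinarith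
  obtain ⟨_, _, _, _⟩ := this
  interval_cases x <;> interval_cases y <;> simp_all

theorem GaussianInt.sq_re_sq_im_of_associated {x y : GaussianInt} (h : Associated x y) :
    y.re ^ 2 = x.re ^ 2 ∧ y.im ^ 2 = x.im ^ 2 ∨ y.re ^ 2 = x.im ^ 2 ∧ y.im ^ 2 = x.re ^ 2 := by
  obtain ⟨u, rfl⟩ := h
  have hu : u.1.re * u.1.re + u.1.im * u.1.im = 1 := by
    simpa [norm_def] using (norm_eq_one_iff' (by norm_num) u.1).mpr u.isUnit
  rcases Int.sq_eq_one_and_eq_zero_of_mul_self_add_mul_self_eq_one hu with ⟨hre, him⟩ | ⟨hre, him⟩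
  · left
    simp only [re_mul, im_mul, him]
    constructor
    · linear_combination x.re ^ 2 * hre
    · linear_combination x.im ^ 2 * hre
  · right
    simp only [re_mul, im_mul, hre]
    constructor
    · linear_combination x.im ^ 2 * him
    · linear_combination x.re ^ 2 * him

theorem Nat.Prime.sq_add_sq_unique {p : ℕ} (hp : p.Prime) {a b a' b' : ℤ}
    (h : a ^ 2 + b ^ 2 = p) (h' : a' ^ 2 + b' ^ 2 = p) :
    ((a' = a ∨ a' = -a) ∧ (b' = b ∨ b' = -b)) ∨
      ((a' = b ∨ a' = -b) ∧ (b' = a ∨ b' = -a)) := by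
  let z : GaussianInt := ⟨a, b⟩
  let w : GaussianInt := ⟨a', b'⟩
  have hz : z.norm = p := by simp [z, norm_def, ← h, sq]
  have hw : w.norm = p := by simp [w, norm_def, ← h', sq]
  have irreducible {x : GaussianInt} (hx : x.norm = p) : Irreducible x :=
    irreducible_of_prime_natAbs_norm (by simpa [hx] using hp)
  have hdvd : w ∣ z * star z := ⟨star w, by rw [← norm_eq_mul_conj, ← norm_eq_mul_conj, hz, hw]⟩
  have key : Associated z w ∨ Associated (star z) w := by
    rcases (irreducible hw).prime.dvd_or_dvd hdvd with hwz | hwz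
    · exact .inl ((irreducible hw).associated_of_dvd (irreducible hz) hwz).symm
    · exact .inr ((irreducible hw).associated_of_dvd (irreducible (by rwa [norm_conj])) hwz).symm
  simp only [← sq_eq_sq_iff_eq_or_eq_neg]
  rcases key with hzw | hzw <;> simpa [z, w] using GaussianInt.sq_re_sq_im_of_associated hzw

theorem Int.gcd_eq_one_of_sq_add_sq_eq_prime {p : ℕ} (hp : p.Prime) {a b : ℤ}
    (h : a ^ 2 + b ^ 2 = p) : Int.gcd a b = 1 := by
  have hdvd : ((Int.gcd a b : ℤ) * Int.gcd a b) ∣ p := by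
    rw [← h, ← sq]
    exact dvd_add (pow_dvd_pow_of_dvd (Int.gcd_dvd_left a b) _)
      (pow_dvd_pow_of_dvd (Int.gcd_dvd_right a b) _)
  exact Nat.isUnit_iff.mp (hp.prime.squarefree _ (by exact_mod_cast hdvd))

theorem Int.not_exists_coprime_sq_add_sq_of_prime_dvd {n : ℤ} {q : ℕ} (hq : q.Prime)
    (hq3 : q % 4 = 3) (hdvd : (q : ℤ) ∣ n) :
    ¬ ∃ a b : ℤ, Int.gcd a b = 1 ∧ n = a ^ 2 + b ^ 2 := by
  rintro ⟨a, b, hab, rfl⟩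
  have := Fact.mk hq
  have hsq := ZMod.isSquare_neg_one_of_eq_sq_add_sq_of_isCoprime rfl
    (Int.isCoprime_iff_gcd_eq_one.mpr hab)
  exact ZMod.exists_sq_eq_neg_one_iff.mp
    (ZMod.isSquare_neg_one_of_dvd (Int.natCast_dvd.mp hdvd) hsq) hq3

theorem Int.not_exists_sq_add_four_mul_sq_of_emod_four_eq_two {n : ℤ} (hn : n % 4 = 2) :
    ¬ ∃ a b : ℤ, n = a ^ 2 + 4 * b ^ 2 := by
  rintro ⟨a, b, rfl⟩
  rcases Int.even_or_odd' a with ⟨t, rfl | rfl⟩ <;> ring_nf at hn <;> omega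

theorem Nat.infinite_setOf_prime_and_forall_intModEq {ι : Type*} {s : Finset ι} {n : ι → ℕ}
    {a : ι → ℤ} (hn : ∀ i ∈ s, n i ≠ 0) (hcop : (s : Set ι).Pairwise fun i j ↦ (n i).Coprime (n j))
    (ha : ∀ i ∈ s, IsCoprime (a i) (n i)) :
    {p : ℕ | p.Prime ∧ ∀ i ∈ s, (p : ℤ) ≡ a i [ZMOD n i]}.Infinite := by
  obtain ⟨x, hx⟩ := Nat.chineseRemainderOfFinset (fun i ↦ (a i % n i).toNat) n s hn hcop
  have hxa : ∀ i ∈ s, (x : ℤ) ≡ a i [ZMOD n i] := fun i hi ↦ by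
    have := Int.natCast_modEq_iff.mpr (hx i hi)
    rw [Int.toNat_of_nonneg (Int.emod_nonneg _ (by exact_mod_cast hn i hi))] at this
    exact this.trans (Int.mod_modEq _ _)
  have hN : ∏ i ∈ s, n i ≠ 0 := Finset.prod_ne_zero_iff.mpr hn
  have hxN : IsCoprime (x : ℤ) (∏ i ∈ s, n i : ℕ) := by
    push_cast
    refine IsCoprime.prod_right fun i hi ↦ ?_
    obtain ⟨t, ht⟩ := (hxa i hi).symm.dvd
    rw [eq_add_of_sub_eq ht, add_comm]
    exact (ha i hi).add_mul_left_left t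
  refine Set.infinite_of_forall_exists_gt fun m ↦ ?_
  obtain ⟨p, hpm, hp, hpx⟩ := Nat.forall_exists_prime_gt_and_zmodEq m hN hxN
  refine ⟨p, ⟨hp, fun i hi ↦ ?_⟩, hpm⟩
  exact ((hpx.of_dvd (by exact_mod_cast Finset.dvd_prod_of_mem n hi)).trans (hxa i hi))

theorem Int.isCoprime_neg_mul_add_one_div_two {q k : ℤ} (hq : q % 2 = 1) (hk : IsCoprime k q) :
    IsCoprime (-k * ((q + 1) / 2)) q :=
  hk.neg_left.mul_left ⟨2, -1, by omega⟩

theorem Int.dvd_two_mul_add_of_modEq_neg_mul_add_one_div_two {q k p : ℤ} (hq : q % 2 = 1)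
    (h : p ≡ -k * ((q + 1) / 2) [ZMOD q]) : q ∣ 2 * p + k := by
  obtain ⟨t, ht⟩ := h.dvd
  have hc : 2 * ((q + 1) / 2) = q + 1 := by omega
  exact ⟨-2 * t - k, by linear_combination (-2) * ht - k * hc⟩

theorem exists_injective_prime_mod_four_eq_three_gt (B : ℕ) :
    ∃ q : ℤ → ℕ, Function.Injective q ∧ ∀ k, (q k).Prime ∧ q k % 4 = 3 ∧ B < q k := by
  have hS : ({q : ℕ | q.Prime ∧ q ≡ 3 [MOD 4]} \ Set.Iic B).Infinite :=
    (Nat.infinite_setOfPred_prime_and_modEq (by norm_num) (by norm_num)).sdiff (Set.finite_Iic B)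
  let e := Equiv.intEquivNat.toEmbedding.trans hS.natEmbedding
  refine ⟨fun k ↦ e k, Subtype.val_injective.comp e.injective, fun k ↦ ?_⟩
  obtain ⟨⟨hp, h3⟩, hB⟩ := (e k).2
  exact ⟨hp, h3, not_le.mp hB⟩

theorem infinite_setOf_prime_and_forall_dvd_two_mul_add {S : Finset ℤ} {q : ℤ → ℕ}
    (hq_inj : Function.Injective q) (hq : ∀ k, (q k).Prime ∧ q k % 2 = 1)
    (hS : ∀ k ∈ S, ¬ (q k : ℤ) ∣ k) :
    {p : ℕ | p.Prime ∧ p % 4 = 1 ∧ ∀ k ∈ S, (q k : ℤ) ∣ 2 * p + k}.Infinite := by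
  -- the extra index `0 ∉ S` carries the condition `p ≡ 1 [ZMOD 4]`
  let n : ℤ → ℕ := fun k ↦ if k = 0 then 4 else q k
  -- `(q k + 1) / 2` is the inverse of `2` modulo `q k`
  let a : ℤ → ℤ := fun k ↦ if k = 0 then 1 else -k * ((q k + 1) / 2)
  have hS0 : (0 : ℤ) ∉ S := fun h ↦ hS 0 h (dvd_zero _)
  have hodd (k : ℤ) : (q k : ℤ) % 2 = 1 := by
    have := (hq k).2
    omega
  have hcop4 (k : ℤ) : Nat.Coprime 4 (q k) := by
    simpa using (Nat.coprime_two_left.mpr (Nat.odd_iff.mpr (hq k).2)).pow_left 2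
  have hn : ∀ k ∈ insert 0 S, n k ≠ 0 := fun k _ ↦ by
    by_cases hk : k = 0 <;> simp [n, hk, (hq k).1.ne_zero]
  have hcop : ((insert 0 S : Finset ℤ) : Set ℤ).Pairwise fun i j ↦ (n i).Coprime (n j) := by
    intro i _ j _ hij
    by_cases hi : i = 0 <;> by_cases hj : j = 0
    · exact absurd (hi.trans hj.symm) hij
    · simpa [n, hi, hj] using hcop4 j
    · simpa [n, hi, hj] using (hcop4 i).symm
    · simpa [n, hi, hj] using (Nat.coprime_primes (hq i).1 (hq j).1).mpr (hq_inj.ne hij)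
  have ha : ∀ k ∈ insert 0 S, IsCoprime (a k) (n k) := by
    intro k hk
    rcases Finset.mem_insert.mp hk with rfl | hk
    · simpa [a, n] using isCoprime_one_left
    simp only [a, n, ne_of_mem_of_not_mem hk hS0, if_false]
    refine Int.isCoprime_neg_mul_add_one_div_two (hodd k) ?_
    exact ((Prime.coprime_iff_not_dvd (Nat.prime_iff_prime_int.mp (hq k).1)).mpr (hS k hk)).symm
  refine (Nat.infinite_setOf_prime_and_forall_intModEq hn hcop ha).mono ?_
  rintro p ⟨hp, hpa⟩
  refine ⟨hp, ?_, fun k hk ↦ ?_⟩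
  · have h4 : (p : ℤ) ≡ 1 [ZMOD 4] := by simpa [n, a] using hpa 0 (Finset.mem_insert_self 0 _)
    unfold Int.ModEq at h4
    omega
  · have hpk : (p : ℤ) ≡ -k * ((q k + 1) / 2) [ZMOD q k] := by
      simpa [n, a, ne_of_mem_of_not_mem hk hS0] using hpa k (Finset.mem_insert_of_mem hk)
    exact Int.dvd_two_mul_add_of_modEq_neg_mul_add_one_div_two (hodd k) hpk

theorem infinite_setOf_prime_and_forall_exists_prime_dvd_two_mul_add (g : ℤ) :
    {p : ℕ | p.Prime ∧ p % 4 = 1 ∧ ∀ k : ℤ, 0 < |k| → |k| ≤ g →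
      ∃ q : ℕ, q.Prime ∧ q % 4 = 3 ∧ (q : ℤ) ∣ 2 * p + k}.Infinite := by
  obtain ⟨q, hq_inj, hq⟩ := exists_injective_prime_mod_four_eq_three_gt g.toNat
  have hS : ∀ k ∈ (Finset.Icc (-g) g).erase 0, ¬ (q k : ℤ) ∣ k := by
    intro k hk hdvd
    obtain ⟨hk0, hkg⟩ := Finset.mem_erase.mp hk
    have hkq := (hq k).2.2
    rw [Finset.mem_Icc] at hkg
    exact hk0 (Int.eq_zero_of_abs_lt_dvd hdvd (abs_lt.mpr (by omega)))
  refine (infinite_setOf_prime_and_forall_dvd_two_mul_add hq_inj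
    (fun k ↦ ⟨(hq k).1, Nat.odd_of_mod_four_eq_three (hq k).2.1⟩) hS).mono ?_
  rintro p ⟨hp, hp4, hpq⟩
  refine ⟨hp, hp4, fun k hk0 hkg ↦ ⟨q k, (hq k).1, (hq k).2.1, hpq k ?_⟩⟩
  exact Finset.mem_erase.mpr ⟨abs_pos.mp hk0, Finset.mem_Icc.mpr (abs_le.mp hkg)⟩

theorem stmt_10_general (g : ℤ) :
    {m : ℤ | (∃ p : ℕ, p.Prime ∧ m = 2 * (p : ℤ)) ∧
      (∃ a b : ℤ, Int.gcd a b = 1 ∧ m = 2 * (a ^ 2 + b ^ 2) ∧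
        ∀ a' b' : ℤ, m = 2 * (a' ^ 2 + b' ^ 2) →
          ((a' = a ∨ a' = -a) ∧ (b' = b ∨ b' = -b)) ∨
          ((a' = b ∨ a' = -b) ∧ (b' = a ∨ b' = -a))) ∧
      (∀ k : ℤ, 0 < |k| → |k| ≤ g →
        ¬ ∃ a b : ℤ, Int.gcd a b = 1 ∧ m + k = a ^ 2 + b ^ 2) ∧
      (¬ ∃ a b : ℤ, m = a ^ 2 + 4 * b ^ 2)}.Infinite := by
  have h2p : Function.Injective fun p : ℕ ↦ 2 * (p : ℤ) := fun p p' h ↦ by simpa using h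
  refine ((infinite_setOf_prime_and_forall_exists_prime_dvd_two_mul_add g).image
    h2p.injOn).mono ?_
  rintro _ ⟨p, ⟨hp, hp4, hq⟩, rfl⟩
  beta_reduce
  refine ⟨⟨p, hp, rfl⟩, ?_, fun k hk hkg ↦ ?_, ?_⟩
  · have := Fact.mk hp
    obtain ⟨a, b, hsum⟩ := Nat.Prime.sq_add_sq (p := p) (by omega)
    have hab : (a : ℤ) ^ 2 + (b : ℤ) ^ 2 = p := by exact_mod_cast hsum
    refine ⟨a, b, Int.gcd_eq_one_of_sq_add_sq_eq_prime hp hab, by rw [hab], fun a' b' h ↦ ?_⟩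
    exact hp.sq_add_sq_unique hab (by linarith)
  · obtain ⟨q, hq, hq3, hdvd⟩ := hq k hk hkg
    exact Int.not_exists_coprime_sq_add_sq_of_prime_dvd hq hq3 hdvd
  · exact Int.not_exists_sq_add_four_mul_sq_of_emod_four_eq_two (by omega)

/-- For every integer `g > 0` there are infinitely many integers `m = 2p` with `p` prime
such that:
(i) `m = 2(a² + b²)` for some relatively prime integers `a, b`, and every integer solution
`(a', b')` of `m = 2(a'² + b'²)` satisfies `(a', b') = (±a, ±b)` or `(a', b') = (±b, ±a)`;
(ii) for `0 < |k| ≤ g`, the integer `m + k` has no primitive representation as `a² + b²`;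
(iii) `m` has no representation as `a² + 4 b²` with `a, b` integers. -/
theorem stmt_10 (g : ℤ) (hg : 0 < g) :
    {m : ℤ | (∃ p : ℕ, p.Prime ∧ m = 2 * (p : ℤ)) ∧
      (∃ a b : ℤ, Int.gcd a b = 1 ∧ m = 2 * (a ^ 2 + b ^ 2) ∧
        ∀ a' b' : ℤ, m = 2 * (a' ^ 2 + b' ^ 2) →
          ((a' = a ∨ a' = -a) ∧ (b' = b ∨ b' = -b)) ∨
          ((a' = b ∨ a' = -b) ∧ (b' = a ∨ b' = -a))) ∧
      (∀ k : ℤ, 0 < |k| → |k| ≤ g →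
        ¬ ∃ a b : ℤ, Int.gcd a b = 1 ∧ m + k = a ^ 2 + b ^ 2) ∧
      (¬ ∃ a b : ℤ, m = a ^ 2 + 4 * b ^ 2)}.Infinite :=
  stmt_10_general g
end

section
/- If a and b are integers with a > b > 0, then a b (a² − b²) ≥ r³/4, where r = √(a² + b²) (equivalently, 16 a² b² (a² − b²)² ≥ (a² + b²)³). -/
lemma stmt_11_key (a b : ℝ) (hb : 1 ≤ b) (hab : b + 1 ≤ a) :
    (a^2+b^2)^3 ≤ (a*b*(a^2-b^2)*4)^2 := by
  have hd : 1 ≤ (a-b)^2 := by nlinarith [mul_pos (mul_pos (show (0:ℝ)<(a:ℝ) by linarith) (show (0:ℝ)<(b:ℝ) by linarith)) (show (0:ℝ)<(a:ℝ)^2-(b:ℝ)^2 by nlinarith)]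
  have hb2 : 1 ≤ b^2 := by nlinarith [mul_pos (mul_pos (show (0:ℝ)<(a:ℝ) by linarith) (show (0:ℝ)<(b:ℝ) by linarith)) (show (0:ℝ)<(a:ℝ)^2-(b:ℝ)^2 by nlinarith)]
  have ha : 0 < a := by linarith
  rcases le_or_gt a (2*b) with h | h
  · have hS : a^2 + b^2 ≤ 4*(a*b) := by nlinarith [mul_pos (mul_pos (show (0:ℝ)<(a:ℝ) by linarith) (show (0:ℝ)<(b:ℝ) by linarith)) (show (0:ℝ)<(a:ℝ)^2-(b:ℝ)^2 by nlinarith)]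
    have h1 : (a^2+b^2)^3 ≤ (4*(a*b))^3 := by
      apply pow_le_pow_left₀ (by positivity) hS
    have h2 : (4*(a*b))^3 ≤ (a*b*(a^2-b^2)*4)^2 := by
      nlinarith [mul_nonneg (sub_nonneg.2 hd) (sq_nonneg (a+b)),
        sq_nonneg (a-b), mul_pos (mul_pos ha (show (0:ℝ)<b by linarith)) (mul_pos ha (show (0:ℝ)<b by linarith)),
        mul_nonneg (mul_nonneg (sq_nonneg a) (sq_nonneg b)) (sq_nonneg (a-b))]
    linarith
  · have hS : a^2 + b^2 ≤ (5/4)*a^2 := by nlinarith [mul_pos (mul_pos (show (0:ℝ)<(a:ℝ) by linarith) (show (0:ℝ)<(b:ℝ) by linarith)) (show (0:ℝ)<(a:ℝ)^2-(b:ℝ)^2 by nlinarith)]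
    have h1 : (a^2+b^2)^3 ≤ ((5/4)*a^2)^3 := by
      apply pow_le_pow_left₀ (by positivity) hS
    have hd2 : a^2/4 ≤ (a-b)^2 := by nlinarith [mul_pos (mul_pos (show (0:ℝ)<(a:ℝ) by linarith) (show (0:ℝ)<(b:ℝ) by linarith)) (show (0:ℝ)<(a:ℝ)^2-(b:ℝ)^2 by nlinarith)]
    have h2 : ((5/4)*a^2)^3 ≤ (a*b*(a^2-b^2)*4)^2 := by
      nlinarith [mul_nonneg (sub_nonneg.2 hd2) (mul_nonneg (sq_nonneg (a+b)) (mul_nonneg (sq_nonneg a) (sq_nonneg b))),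
        mul_nonneg (sub_nonneg.2 hb2) (mul_nonneg (sq_nonneg a) (sq_nonneg (a*(a+b)))),
        pow_pos ha 6, sq_nonneg (a+b), mul_nonneg (sub_nonneg.2 (show a^2 ≤ (a+b)^2 by nlinarith)) (mul_nonneg (sq_nonneg a) (sq_nonneg a))]
    linarith

/-- If `a > b > 0` are integers then `a b (a² − b²) ≥ r³/4` where `r = √(a² + b²)`. -/
theorem stmt_11 (a b : ℤ) (hab : b < a) (hb : 0 < b) :
    (Real.sqrt ((a : ℝ) ^ 2 + (b : ℝ) ^ 2)) ^ 3 / 4 ≤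
      (a : ℝ) * (b : ℝ) * ((a : ℝ) ^ 2 - (b : ℝ) ^ 2) := by
  have hb' : (1 : ℝ) ≤ (b : ℝ) := by exact_mod_cast hb
  have hab' : (b : ℝ) + 1 ≤ (a : ℝ) := by exact_mod_cast hab
  have hx : (0:ℝ) ≤ (a : ℝ)^2 + (b : ℝ)^2 := by positivity
  have hc : (0:ℝ) ≤ (a : ℝ) * b * ((a:ℝ)^2 - b^2) * 4 := by nlinarith [mul_pos (mul_pos (show (0:ℝ)<(a:ℝ) by linarith) (show (0:ℝ)<(b:ℝ) by linarith)) (show (0:ℝ)<(a:ℝ)^2-(b:ℝ)^2 by nlinarith)]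
  rw [div_le_iff₀ (by norm_num : (0:ℝ) < 4)]
  have h1 : (Real.sqrt ((a : ℝ)^2 + (b : ℝ)^2)) ^ 3
      = Real.sqrt (((a : ℝ)^2 + (b : ℝ)^2) ^ 3) := by
    rw [show (((a:ℝ)^2 + (b:ℝ)^2)^3) = ((a:ℝ)^2 + (b:ℝ)^2)^2 * ((a:ℝ)^2 + (b:ℝ)^2) by ring,
      Real.sqrt_mul (by positivity), Real.sqrt_sq hx, pow_succ, Real.sq_sqrt hx]
  rw [h1]
  calc Real.sqrt (((a : ℝ)^2 + (b : ℝ)^2) ^ 3)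
      ≤ Real.sqrt (((a : ℝ) * b * ((a:ℝ)^2 - b^2) * 4) ^ 2) :=
        Real.sqrt_le_sqrt (stmt_11_key _ _ hb' hab')
    _ = (a : ℝ) * b * ((a:ℝ)^2 - b^2) * 4 := Real.sqrt_sq hc
end

section
/- For every integer g ≥ 1 there exist infinitely many primes p with p ≡ 1 (mod 12) such that for every integer k with 1 ≤ k ≤ g, both p + k and p − k are divisible by some prime congruent to 5 modulo 6. -/
/-!
Choose distinct primes `q₁, q₁', …, q_g, q_g'`, all `≡ 5 (mod 6)` and larger than `g`.
By the Chinese remainder theorem there is a unit residue class modulo `12 ∏ qₖ qₖ'` whose members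
are `≡ 1 (mod 12)`, `≡ -k (mod qₖ)` and `≡ k (mod qₖ')`; every integer in it has the required
prime factors near it, and Dirichlet's theorem puts infinitely many primes in it.
-/

def FactorsNear (P : ℕ → Prop) (g : ℕ) (x : ℤ) : Prop :=
  ∀ k : ℕ, 1 ≤ k → k ≤ g →
    (∃ q : ℕ, q.Prime ∧ P q ∧ (q : ℤ) ∣ x + k) ∧ (∃ q : ℕ, q.Prime ∧ P q ∧ (q : ℤ) ∣ x - k)

lemma FactorsNear.succ {P : ℕ → Prop} {g : ℕ} {x : ℤ} (h : FactorsNear P g x)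
    (hadd : ∃ q : ℕ, q.Prime ∧ P q ∧ (q : ℤ) ∣ x + (g + 1 : ℕ))
    (hsub : ∃ q : ℕ, q.Prime ∧ P q ∧ (q : ℤ) ∣ x - (g + 1 : ℕ)) :
    FactorsNear P (g + 1) x := by
  intro k hk1 hkg
  rcases Nat.lt_or_ge k (g + 1) with hlt | hge
  · exact h k hk1 (Nat.lt_succ_iff.mp hlt)
  · obtain rfl : k = g + 1 := le_antisymm hkg hge
    exact ⟨hadd, hsub⟩

lemma ZMod.exists_isUnit_forall_intCast_eq {m n : ℕ} (h : m.Coprime n) {a : ZMod m}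
    {b : ZMod n} (ha : IsUnit a) (hb : IsUnit b) :
    ∃ c : ZMod (m * n), IsUnit c ∧
      ∀ x : ℤ, (x : ZMod (m * n)) = c → (x : ZMod m) = a ∧ (x : ZMod n) = b := by
  refine ⟨(ZMod.chineseRemainder h).symm (a, b),
    (Prod.isUnit_iff.mpr ⟨ha, hb⟩).map (ZMod.chineseRemainder h).symm, fun x hx => ?_⟩
  have hcrt : ZMod.chineseRemainder h (x : ZMod (m * n)) = ((x : ZMod m), (x : ZMod n)) := by
    rw [map_intCast]; rfl
  rw [hx, RingEquiv.apply_symm_apply] at hcrt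
  exact ⟨(Prod.ext_iff.mp hcrt).1.symm, (Prod.ext_iff.mp hcrt).2.symm⟩

lemma isUnit_intCast_of_natAbs_lt {q : ℕ} (hq : q.Prime) {r : ℤ} (hr0 : r ≠ 0)
    (hrq : r.natAbs < q) : IsUnit (r : ZMod q) := by
  have := Fact.mk hq
  rw [isUnit_iff_ne_zero, Ne, ZMod.intCast_zmod_eq_zero_iff_dvd]
  exact fun hdvd => hr0 (Int.eq_zero_of_dvd_of_natAbs_lt_natAbs hdvd hrq)

lemma exists_prime_refine_residue {P : ℕ → Prop} (hP : {q | q.Prime ∧ P q}.Infinite)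
    {M : ℕ} (hM : 0 < M) {b : ZMod M} (hb : IsUnit b) {r : ℤ} (hr : r ≠ 0) :
    ∃ q : ℕ, q.Prime ∧ P q ∧ ∃ c : ZMod (M * q), IsUnit c ∧
      ∀ x : ℤ, (x : ZMod (M * q)) = c → (x : ZMod M) = b ∧ (q : ℤ) ∣ x - r := by
  obtain ⟨q, ⟨hq, hPq⟩, hlt⟩ := hP.exists_gt (M + r.natAbs)
  have hcop : M.Coprime q := (Nat.coprime_of_lt_prime hM.ne' (by omega) hq).symm
  obtain ⟨c, hc, hcx⟩ := ZMod.exists_isUnit_forall_intCast_eq hcop hb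
    (isUnit_intCast_of_natAbs_lt hq hr (by omega))
  refine ⟨q, hq, hPq, c, hc, fun x hx => ⟨(hcx x hx).1, ?_⟩⟩
  exact (ZMod.intCast_eq_intCast_iff_dvd_sub r x q).mp (hcx x hx).2.symm

theorem exists_isUnit_forall_factorsNear {P : ℕ → Prop} (hP : {q | q.Prime ∧ P q}.Infinite)
    {m : ℕ} (hm : 0 < m) {a : ZMod m} (ha : IsUnit a) (g : ℕ) :
    ∃ M : ℕ, 0 < M ∧ ∃ b : ZMod M, IsUnit b ∧
      ∀ x : ℤ, (x : ZMod M) = b → (x : ZMod m) = a ∧ FactorsNear P g x := by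
  induction g with
  | zero => exact ⟨m, hm, a, ha, fun x hx => ⟨hx, fun k hk1 hk0 => by omega⟩⟩
  | succ g ih =>
    obtain ⟨M, hM, b, hb, hbx⟩ := ih
    have hK : ((g + 1 : ℕ) : ℤ) ≠ 0 := by omega
    obtain ⟨q, hq, hPq, c, hc, hcx⟩ := exists_prime_refine_residue hP hM hb (neg_ne_zero.mpr hK)
    obtain ⟨q', hq', hPq', d, hd, hdx⟩ :=
      exists_prime_refine_residue hP (Nat.mul_pos hM hq.pos) hc hK
    refine ⟨M * q * q', Nat.mul_pos (Nat.mul_pos hM hq.pos) hq'.pos, d, hd, fun x hx => ?_⟩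
    obtain ⟨hxc, hsub⟩ := hdx x hx
    obtain ⟨hxb, hadd⟩ := hcx x hxc
    rw [sub_neg_eq_add] at hadd
    exact ⟨(hbx x hxb).1, (hbx x hxb).2.succ ⟨q, hq, hPq, hadd⟩ ⟨q', hq', hPq', hsub⟩⟩

lemma infinite_setOf_prime_mod_six_eq_five : {q : ℕ | q.Prime ∧ q % 6 = 5}.Infinite := by
  refine (Nat.infinite_setOfPred_prime_and_eq_mod (q := 6) (a := 5) (by decide)).mono ?_
  rintro q ⟨hq, hq5⟩
  exact ⟨hq, (ZMod.natCast_eq_natCast_iff' q 5 6).mp hq5⟩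

theorem stmt_16_general (g : ℕ) :
    {p : ℕ | p.Prime ∧ p % 12 = 1 ∧
      ∀ k : ℕ, 1 ≤ k → k ≤ g →
        (∃ q : ℕ, q.Prime ∧ q % 6 = 5 ∧ (q : ℤ) ∣ (p : ℤ) + (k : ℤ)) ∧
        (∃ q : ℕ, q.Prime ∧ q % 6 = 5 ∧ (q : ℤ) ∣ (p : ℤ) - (k : ℤ))}.Infinite := by
  obtain ⟨M, hM, b, hb, hbx⟩ := exists_isUnit_forall_factorsNear
    infinite_setOf_prime_mod_six_eq_five (m := 12) (by norm_num) isUnit_one g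
  have : NeZero M := ⟨hM.ne'⟩
  refine (Nat.infinite_setOfPred_prime_and_eq_mod hb).mono ?_
  rintro p ⟨hp, hpb⟩
  obtain ⟨hp1, hfactors⟩ := hbx p (by rwa [Int.cast_natCast])
  rw [Int.cast_natCast, ← Nat.cast_one, ZMod.natCast_eq_natCast_iff'] at hp1
  exact ⟨hp, hp1, hfactors⟩

/-- For every integer `g ≥ 1` there are infinitely many primes `p ≡ 1 (mod 12)` such that
for every `1 ≤ k ≤ g`, both `p + k` and `p − k` are divisible by some prime congruent to
`5` modulo `6`. -/
theorem stmt_16 (g : ℕ) (hg : 1 ≤ g) :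
    {p : ℕ | p.Prime ∧ p % 12 = 1 ∧
      ∀ k : ℕ, 1 ≤ k → k ≤ g →
        (∃ q : ℕ, q.Prime ∧ q % 6 = 5 ∧ (q : ℤ) ∣ (p : ℤ) + (k : ℤ)) ∧
        (∃ q : ℕ, q.Prime ∧ q % 6 = 5 ∧ (q : ℤ) ∣ (p : ℤ) - (k : ℤ))}.Infinite :=
  stmt_16_general g
end
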